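/- For fixed reals y_1 > ... > y_d with ∑ y_i = 0 and any ε with 0 < ε < 1, as n → ∞: ∑_{i=1}^d (n + y_i·n^ε - 1/2)·log(1 + y_i·n^{ε-1}) is asymptotically equal to (n^{2ε-1}/2)·∑_{i=1}^d y_i² when ∑ y_i² > 0; in particular it tends to (1/2)∑ y_i² when ε = 1/2. -/

import Mathlib

open Finset

def rect (d q : ℕ) : YoungDiagram where
  cells := Finset.range d ×ˢ Finset.range q
  isLowerSet := by
    rintro ⟨a, b⟩ ⟨c, e⟩ ⟨h1, h2⟩ h
    simp only [Finset.coe_product, Set.mem_prod, Finset.mem_coe, Finset.mem_range] at *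
    omega

def complY (d q : ℕ) (μ : YoungDiagram) : YoungDiagram where
  cells := (Finset.range d ×ˢ Finset.range q).filter
    (fun c => c.2 < q - μ.rowLen (d - 1 - c.1))
  isLowerSet := by
    rintro ⟨a, b⟩ ⟨c, e⟩ ⟨h1, h2⟩ h
    simp only [Finset.coe_filter, Set.mem_setOf_eq, Finset.mem_product, Finset.mem_range] at *
    have := μ.rowLen_anti (d - 1 - a) (d - 1 - c) (by omega)
    omega

noncomputable def dimSYT (μ : YoungDiagram) : ℕ :=
  Nat.card {f : μ.cells → Fin μ.card //
    Function.Bijective f ∧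
    ∀ a b : μ.cells, (a : ℕ × ℕ).1 ≤ (b : ℕ × ℕ).1 → (a : ℕ × ℕ).2 ≤ (b : ℕ × ℕ).2 →
      a ≠ b → f a < f b}

def HasDecreasingSubseq {N : ℕ} (σ : Equiv.Perm (Fin N)) (k : ℕ) : Prop :=
  ∃ s : Fin k → Fin N, StrictMono s ∧ ∀ i j : Fin k, i < j → σ (s j) < σ (s i)

def HasIncreasingSubseq {N : ℕ} (σ : Equiv.Perm (Fin N)) (k : ℕ) : Prop :=
  ∃ s : Fin k → Fin N, StrictMono s ∧ ∀ i j : Fin k, i < j → σ (s i) < σ (s j)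

noncomputable def S (d N : ℕ) : ℕ :=
  Nat.card {σ : Equiv.Perm (Fin N) // ¬ HasDecreasingSubseq σ (d + 1)}

noncomputable def W (d : ℕ) (y : Fin d → ℝ) : ℝ :=
  (1/2) * ∑ i, y i ^ 2 -
    ∑ p ∈ Finset.univ.filter (fun p : Fin d × Fin d => p.1 < p.2), Real.log (y p.1 - y p.2)

noncomputable def dimR (d : ℕ) (l : Fin d → ℝ) : ℝ :=
  (Real.Gamma (∑ i, l i + 1) / ∏ i, Real.Gamma (l i - (i : ℕ) + d)) *
    ∏ p ∈ Finset.univ.filter (fun p : Fin d × Fin d => p.1 < p.2),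
      (l p.1 - l p.2 + (p.2 : ℕ) - (p.1 : ℕ))

noncomputable def mehta (d : ℕ) (β : ℝ) : ℝ :=
  ∫ x : Fin d → ℝ, Real.exp (-(β/2) * ∑ i, x i ^ 2) *
    ∏ p ∈ Finset.univ.filter (fun p : Fin d × Fin d => p.1 < p.2), |x p.1 - x p.2| ^ β

open Real Filter Topology

/-! Put `t = n ^ (ε - 1) → 0`, so that `n ^ ε = n t → ∞`. Since `∑ yᵢ = 0` we may subtract
`yᵢ n ^ ε` from the `i`-th summand; multiplied by `n ^ (1 - 2ε)` it becomes
`((1 + yᵢ t) log (1 + yᵢ t) - yᵢ t) / t² - (log (1 + yᵢ t) / t) / (2 n ^ ε)`.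
The first term tends to `yᵢ² / 2` because `(1 + s) log (1 + s) - s = s² / 2 + O(s³)`, and the
second tends to `yᵢ · 0`. -/

lemma abs_log_one_add_sub_add_sq_div_two_le {s : ℝ} (hs : |s| ≤ 1 / 2) :
    |log (1 + s) - s + s ^ 2 / 2| ≤ 2 * |s| ^ 3 := by
  have h := abs_log_sub_add_sum_range_le (x := -s) (by rw [abs_neg]; linarith) 2
  norm_num [Finset.sum_range_succ] at h
  calc |log (1 + s) - s + s ^ 2 / 2| = |-s + s ^ 2 / 2 + log (1 + s)| := by ring_nf
    _ ≤ |s| ^ 3 / (1 - |s|) := h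
    _ ≤ 2 * |s| ^ 3 := by
        rw [div_le_iff₀ (by linarith)]
        nlinarith [pow_nonneg (abs_nonneg s) 3]

lemma abs_one_add_mul_log_one_add_sub_le {s : ℝ} (hs : |s| ≤ 1 / 2) :
    |(1 + s) * log (1 + s) - s - s ^ 2 / 2| ≤ 4 * |s| ^ 3 := by
  have he := abs_log_one_add_sub_add_sq_div_two_le hs
  have h1s : |1 + s| ≤ 3 / 2 := (abs_add_le 1 s).trans (by norm_num; linarith)
  calc |(1 + s) * log (1 + s) - s - s ^ 2 / 2|
      = |(1 + s) * (log (1 + s) - s + s ^ 2 / 2) + (-(s ^ 3 / 2))| := by congr 1; ring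
    _ ≤ 3 / 2 * (2 * |s| ^ 3) + |s| ^ 3 / 2 := by
        refine (abs_add_le _ _).trans (add_le_add ?_ (by simp [abs_div, abs_pow]))
        rw [abs_mul]
        exact mul_le_mul h1s he (abs_nonneg _) (by norm_num)
    _ ≤ 4 * |s| ^ 3 := by nlinarith [pow_nonneg (abs_nonneg s) 3]

lemma tendsto_one_add_mul_log_one_add_sub_div_sq (y : ℝ) :
    Tendsto (fun t => ((1 + y * t) * log (1 + y * t) - y * t) / t ^ 2) (𝓝[≠] 0)
      (𝓝 (y ^ 2 / 2)) := by
  have hsmall : ∀ᶠ t in 𝓝[≠] (0 : ℝ), |y * t| ≤ 1 / 2 := by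
    have : Tendsto (fun t : ℝ => |y * t|) (𝓝 0) (𝓝 0) := by
      simpa using ((continuous_const.mul continuous_id).abs.tendsto (0 : ℝ))
    exact (this.eventually_le_const (by norm_num)).filter_mono nhdsWithin_le_nhds
  have hbound : Tendsto (fun t : ℝ => 4 * |y| ^ 3 * |t|) (𝓝[≠] 0) (𝓝 0) :=
    ((continuous_const.mul continuous_abs).tendsto' 0 0 (by simp)).mono_left
      nhdsWithin_le_nhds
  rw [tendsto_iff_norm_sub_tendsto_zero]
  refine squeeze_zero' (.of_forall fun _ => norm_nonneg _) ?_ hbound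
  filter_upwards [hsmall, self_mem_nhdsWithin] with t hs (ht : t ≠ 0)
  have ht2 : (0 : ℝ) < t ^ 2 := by positivity
  calc ‖((1 + y * t) * log (1 + y * t) - y * t) / t ^ 2 - y ^ 2 / 2‖
      = |(1 + y * t) * log (1 + y * t) - y * t - (y * t) ^ 2 / 2| / t ^ 2 := by
        rw [Real.norm_eq_abs, ← abs_of_pos ht2, ← abs_div, abs_of_pos ht2]
        congr 1; field_simp
    _ ≤ 4 * |y * t| ^ 3 / t ^ 2 := by
        gcongr; exact abs_one_add_mul_log_one_add_sub_le hs
    _ = 4 * |y| ^ 3 * |t| := by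
        rw [abs_mul, ← sq_abs t]
        field_simp [abs_ne_zero.mpr ht]

lemma tendsto_log_one_add_mul_div (y : ℝ) :
    Tendsto (fun t => log (1 + y * t) / t) (𝓝[≠] 0) (𝓝 y) := by
  have hderiv : HasDerivAt (fun t => log (1 + y * t)) y 0 := by
    simpa using (((hasDerivAt_id (0 : ℝ)).const_mul y).const_add 1).log (by simp)
  refine hderiv.tendsto_slope_zero.congr fun t => ?_
  simp [div_eq_inv_mul]

lemma add_mul_sub_half_mul_sub_mul_mul_div_sq_eq {x p y L : ℝ} (hx : x ≠ 0) (hp : p ≠ 0) :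
    ((x + y * p - 1 / 2) * L - y * p) * (x / p ^ 2) =
      ((1 + y * (p / x)) * L - y * (p / x)) / (p / x) ^ 2 - L / (p / x) / (2 * p) := by
  field_simp
  ring

lemma tendsto_rpow_sub_one_atTop_nhdsNE_zero {ε : ℝ} (hε : ε < 1) :
    Tendsto (fun x : ℝ => x ^ (ε - 1)) atTop (𝓝[≠] 0) := by
  refine tendsto_nhdsWithin_iff.mpr ⟨?_, ?_⟩
  · simpa using tendsto_rpow_neg_atTop (y := 1 - ε) (by linarith)
  · filter_upwards [eventually_gt_atTop 0] with x hx
    exact (rpow_pos_of_pos hx _).ne'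

lemma tendsto_add_mul_rpow_mul_log_sub_mul_rpow (y : ℝ) {ε : ℝ} (hε0 : 0 < ε) (hε1 : ε < 1) :
    Tendsto (fun x : ℝ =>
      ((x + y * x ^ ε - 1 / 2) * log (1 + y * x ^ (ε - 1)) - y * x ^ ε) * x ^ (1 - 2 * ε))
      atTop (𝓝 (y ^ 2 / 2)) := by
  have ht := tendsto_rpow_sub_one_atTop_nhdsNE_zero hε1
  have hlim := ((tendsto_one_add_mul_log_one_add_sub_div_sq y).comp ht).sub
    (((tendsto_log_one_add_mul_div y).comp ht).div_atTop
      ((tendsto_rpow_atTop hε0).const_mul_atTop two_pos))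
  rw [sub_zero] at hlim
  refine hlim.congr' ?_
  filter_upwards [eventually_gt_atTop 0] with x hx
  have hpow : x ^ (1 - 2 * ε) = x / (x ^ ε) ^ 2 := by
    rw [rpow_sub hx, rpow_one, mul_comm, rpow_mul hx.le, rpow_two]
  simp only [Function.comp_apply]
  rw [rpow_sub_one hx.ne', hpow,
    add_mul_sub_half_mul_sub_mul_mul_div_sq_eq hx.ne' (rpow_pos_of_pos hx ε).ne']

lemma tendsto_sum_add_mul_rpow_mul_log_mul_rpow {ι : Type*} (s : Finset ι) {y : ι → ℝ}
    (hsum : ∑ i ∈ s, y i = 0) {ε : ℝ} (hε0 : 0 < ε) (hε1 : ε < 1) :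
    Tendsto (fun x : ℝ =>
      (∑ i ∈ s, (x + y i * x ^ ε - 1 / 2) * log (1 + y i * x ^ (ε - 1))) * x ^ (1 - 2 * ε))
      atTop (𝓝 ((∑ i ∈ s, y i ^ 2) / 2)) := by
  rw [Finset.sum_div]
  refine (tendsto_finsetSum s fun i _ =>
    tendsto_add_mul_rpow_mul_log_sub_mul_rpow (y i) hε0 hε1).congr fun x => ?_
  rw [← Finset.sum_mul, Finset.sum_sub_distrib, ← Finset.sum_mul, hsum, zero_mul, sub_zero]

open Real Filter in
theorem stmt19_general (d : ℕ) (y : Fin d → ℝ)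
    (hsum : ∑ i, y i = 0) (hpos : 0 < ∑ i, y i ^ 2) (ε : ℝ) (hε0 : 0 < ε) (hε1 : ε < 1) :
    Tendsto (fun n : ℕ =>
        (∑ i, ((n : ℝ) + y i * (n : ℝ) ^ ε - 1 / 2) * Real.log (1 + y i * (n : ℝ) ^ (ε - 1))) /
        ((n : ℝ) ^ (2 * ε - 1) / 2 * ∑ i, y i ^ 2)) atTop (nhds 1) ∧
    (ε = 1 / 2 → Tendsto (fun n : ℕ =>
        ∑ i, ((n : ℝ) + y i * (n : ℝ) ^ ε - 1 / 2) * Real.log (1 + y i * (n : ℝ) ^ (ε - 1)))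
      atTop (nhds ((1 / 2) * ∑ i, y i ^ 2))) := by
  have hlim := (tendsto_sum_add_mul_rpow_mul_log_mul_rpow Finset.univ hsum hε0 hε1).comp
    tendsto_natCast_atTop_atTop
  refine ⟨?_, ?_⟩
  · have hratio := hlim.mul_const (2 / ∑ i, y i ^ 2)
    rw [div_mul_div_cancel₀ two_ne_zero, div_self hpos.ne'] at hratio
    refine hratio.congr fun n => ?_
    have hpow : (n : ℝ) ^ (1 - 2 * ε) = ((n : ℝ) ^ (2 * ε - 1))⁻¹ := by
      rw [← rpow_neg n.cast_nonneg, neg_sub]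
    simp only [Function.comp_apply, hpow]
    ring
  · rintro rfl
    simp only [show (1 : ℝ) - 2 * (1 / 2) = 0 by norm_num, rpow_zero, mul_one] at hlim
    rwa [one_div_mul_eq_div]

open Real Filter in
theorem stmt19 (d : ℕ) (y : Fin d → ℝ) (hy : ∀ i j : Fin d, i < j → y j < y i)
    (hsum : ∑ i, y i = 0) (hpos : 0 < ∑ i, y i ^ 2) (ε : ℝ) (hε0 : 0 < ε) (hε1 : ε < 1) :
    Tendsto (fun n : ℕ =>
        (∑ i, ((n : ℝ) + y i * (n : ℝ) ^ ε - 1 / 2) * Real.log (1 + y i * (n : ℝ) ^ (ε - 1))) /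
        ((n : ℝ) ^ (2 * ε - 1) / 2 * ∑ i, y i ^ 2)) atTop (nhds 1) ∧
    (ε = 1 / 2 → Tendsto (fun n : ℕ =>
        ∑ i, ((n : ℝ) + y i * (n : ℝ) ^ ε - 1 / 2) * Real.log (1 + y i * (n : ℝ) ^ (ε - 1)))
      atTop (nhds ((1 / 2) * ∑ i, y i ^ 2))) :=
  stmt19_general d y hsum hpos ε hε0 hε1
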